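/- arXiv:1006.1116 — 5 statements merged into one kernel-verified Lean document; each statement's English description precedes it below -/
import Mathlib

section
/- Let U be a finite-dimensional real vector space equipped with two symmetric bilinear forms B₁ and B₂, where B₁ is positive semidefinite and B₂ is negative semidefinite. Then there exists a basis of U that is orthogonal with respect to both B₁ and B₂ simultaneously. -/
/-!
`Q = B₁ - B₂` is positive semidefinite, and since `B₁` and `-B₂` are both positive semidefinite,
`Q v v = 0` forces `B₁ v v = 0`; by Cauchy–Schwarz for `B₁` the kernel of `Q` then lies in the
radical of `B₁`. On a complement of that kernel `Q` is an inner product, and the spectral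
theorem for the `Q`-self-adjoint operator representing `B₁` gives a `Q`-orthonormal basis
diagonalizing `B₁`. Together with any basis of the kernel this diagonalizes `Q` and `B₁`,
hence also `B₂ = B₁ - Q`.
-/

open Module
open LinearMap (BilinForm)
open scoped InnerProductSpace

namespace LinearMap.BilinForm

section CommRing

variable {R M : Type*} [CommRing R] [AddCommGroup M] [Module R M] {B : BilinForm R M}

theorem IsPosSemidef.restrict [LE R] (hB : B.IsPosSemidef) (W : Submodule R M) :
    (B.restrict W).IsPosSemidef :=
  ⟨hB.isSymm.restrict W, ⟨fun w => hB.isNonneg.nonneg w⟩⟩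

theorem iIsOrtho_basis_prodEquivOfIsCompl {ι κ : Type*} (hB : B.IsRefl) {K W : Submodule R M}
    (hKW : IsCompl K W) (hK : K ≤ LinearMap.ker B) (bK : Basis ι R K) (bW : Basis κ R W)
    (hbW : (B.restrict W).iIsOrtho bW) :
    B.iIsOrtho ((bK.prod bW).map (K.prodEquivOfIsCompl W hKW)) := by
  have hKB : ∀ k ∈ K, ∀ x, B k x = 0 := fun k hk x => by rw [hK hk]; rfl
  have hb : ∀ i, (bK.prod bW).map (K.prodEquivOfIsCompl W hKW) i =
      Sum.elim (fun k => (bK k : M)) (fun k => bW k) i := by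
    rintro (k | k) <;> simp [Submodule.coe_prodEquivOfIsCompl']
  rintro (k | k) j hkj <;> simp only [Function.onFun, hb, Sum.elim_inl, Sum.elim_inr]
  · exact hKB _ (bK k).2 _
  · rcases j with l | l
    · exact hB _ _ (hKB _ (bK l).2 _)
    · exact hbW (fun h => hkj (congrArg Sum.inr h))

end CommRing

section InnerProductSpace

variable {E : Type*} [NormedAddCommGroup E] [InnerProductSpace ℝ E] [FiniteDimensional ℝ E]
  {B : BilinForm ℝ E}

theorem IsSymm.exists_isSymmetric_inner_eq (hB : B.IsSymm) :
    ∃ T : E →ₗ[ℝ] E, T.IsSymmetric ∧ ∀ x y : E, ⟪T x, y⟫_ℝ = B x y := by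
  have hnd : (innerₗ E).Nondegenerate :=
    ⟨fun x hx => inner_self_eq_zero.1 (hx x), fun y hy => inner_self_eq_zero.1 (hy y)⟩
  let T := (toDual (innerₗ E) hnd).symm.toLinearMap ∘ₗ B
  have hT : ∀ x y : E, ⟪T x, y⟫_ℝ = B x y := fun x y =>
    apply_toDual_symm_apply (B := innerₗ E) (hB := hnd) (B x) y
  refine ⟨T, fun x y => ?_, hT⟩
  rw [hT, real_inner_comm, hT, hB.eq]

theorem IsSymm.exists_orthonormalBasis_iIsOrtho (hB : B.IsSymm) :
    ∃ b : OrthonormalBasis (Fin (finrank ℝ E)) ℝ E, B.iIsOrtho b := by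
  obtain ⟨T, hT, hTB⟩ := hB.exists_isSymmetric_inner_eq
  refine ⟨hT.eigenvectorBasis rfl, fun i j hij => ?_⟩
  change B _ _ = 0
  rw [← hTB, hT.apply_eigenvectorBasis rfl i, real_inner_smul_left,
    (hT.eigenvectorBasis rfl).orthonormal.2 hij, mul_zero]

end InnerProductSpace

section Real

variable {V : Type*} [AddCommGroup V] [Module ℝ V] {Q B : BilinForm ℝ V}

theorem IsPosSemidef.apply_eq_zero_of_apply_self_eq_zero (hB : B.IsPosSemidef) {v : V}
    (hv : B v v = 0) (w : V) : B v w = 0 := by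
  have key : ∀ t : ℝ, 0 ≤ 2 * t * B v w + t ^ 2 * B w w := fun t => by
    have h := hB.isNonneg.nonneg (v + t • w)
    simp only [map_add, map_smul, LinearMap.add_apply, LinearMap.smul_apply, smul_eq_mul, hv,
      hB.isSymm.eq w v] at h
    linarith
  have hw := hB.isNonneg.nonneg w
  have h : 0 ≤ -(B v w ^ 2 * (B w w + 2)) := by
    have := key (-B v w / (B w w + 1))
    field_simp at this
    linarith
  nlinarith [sq_nonneg (B v w)]

variable [FiniteDimensional ℝ V]

theorem IsPosSemidef.exists_basis_iIsOrtho_of_definite (hQ : Q.IsPosSemidef)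
    (hQdef : ∀ v, Q v v = 0 → v = 0) (hB : B.IsSymm) :
    ∃ b : Basis (Fin (finrank ℝ V)) ℝ V, Q.iIsOrtho b ∧ B.iIsOrtho b := by
  let core : InnerProductSpace.Core ℝ V :=
    { inner := fun x y => Q x y
      conj_inner_symm := fun x y => hQ.isSymm.eq y x
      re_inner_nonneg := hQ.isNonneg.nonneg
      definite := hQdef
      add_left := fun x y z => by simp
      smul_left := fun x y r => by simp }
  let _ := core.toNormedAddCommGroup
  let _ := InnerProductSpace.ofCore core.toCore
  obtain ⟨b, hb⟩ := hB.exists_orthonormalBasis_iIsOrtho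
  exact ⟨b.toBasis, fun i j hij => b.orthonormal.2 hij, by rwa [b.coe_toBasis]⟩

theorem IsPosSemidef.exists_basis_iIsOrtho (hQ : Q.IsPosSemidef) (hB : B.IsSymm)
    (hker : LinearMap.ker Q ≤ LinearMap.ker B) :
    ∃ b : Basis (Fin (finrank ℝ V)) ℝ V, Q.iIsOrtho b ∧ B.iIsOrtho b := by
  obtain ⟨W, hW⟩ := (LinearMap.ker Q).exists_isCompl
  have hQW : ∀ w : W, Q.restrict W w w = 0 → w = 0 := fun w hw => by
    have hwK : (w : V) ∈ LinearMap.ker Q :=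
      LinearMap.ext (hQ.apply_eq_zero_of_apply_self_eq_zero hw)
    simpa [hW.inf_eq_bot] using Submodule.mem_inf.2 ⟨hwK, w.2⟩
  obtain ⟨bW, hQbW, hBbW⟩ :=
    (hQ.restrict W).exists_basis_iIsOrtho_of_definite hQW (hB.restrict W)
  let b := ((finBasis ℝ (LinearMap.ker Q)).prod bW).map
    ((LinearMap.ker Q).prodEquivOfIsCompl W hW)
  let e := finSumFinEquiv.trans (finCongr (Submodule.finrank_add_eq_of_isCompl hW))
  refine ⟨b.reindex e, ?_, ?_⟩ <;> rw [Basis.coe_reindex]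
  · exact (iIsOrtho_basis_prodEquivOfIsCompl hQ.isSymm.isRefl hW le_rfl _ _ hQbW
      ).comp_of_injective e.symm.injective
  · exact (iIsOrtho_basis_prodEquivOfIsCompl hB.isRefl hW hker _ _ hBbW
      ).comp_of_injective e.symm.injective

end Real

end LinearMap.BilinForm

/-- A finite-dimensional real vector space with a positive semidefinite symmetric
bilinear form `B₁` and a negative semidefinite symmetric bilinear form `B₂` admits a
basis which is simultaneously orthogonal for both forms. -/
theorem simultaneous_orthogonal_basis
    (U : Type*) [AddCommGroup U] [Module ℝ U] [FiniteDimensional ℝ U]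
    (B₁ B₂ : LinearMap.BilinForm ℝ U)
    (hB₁symm : B₁.IsSymm) (hB₂symm : B₂.IsSymm)
    (hB₁pos : ∀ v : U, 0 ≤ B₁ v v) (hB₂neg : ∀ v : U, B₂ v v ≤ 0) :
    ∃ b : Module.Basis (Fin (Module.finrank ℝ U)) ℝ U,
      ∀ i j, i ≠ j → B₁ (b i) (b j) = 0 ∧ B₂ (b i) (b j) = 0 := by
  have hB₁ : B₁.IsPosSemidef := ⟨hB₁symm, ⟨hB₁pos⟩⟩
  have hQ : (B₁ - B₂).IsPosSemidef :=
    ⟨hB₁symm.sub hB₂symm, ⟨fun v => sub_nonneg.2 ((hB₂neg v).trans (hB₁pos v))⟩⟩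
  have hker : LinearMap.ker (B₁ - B₂) ≤ LinearMap.ker B₁ := fun v hv => by
    have hQv : B₁ v v - B₂ v v = 0 := LinearMap.congr_fun hv v
    have hB₁v : B₁ v v = 0 := by linarith [hB₁pos v, hB₂neg v]
    exact LinearMap.ext (hB₁.apply_eq_zero_of_apply_self_eq_zero hB₁v)
  obtain ⟨b, hQb, hB₁b⟩ := hQ.exists_basis_iIsOrtho hB₁symm hker
  refine ⟨b, fun i j hij => ⟨hB₁b hij, ?_⟩⟩
  have hQij : B₁ (b i) (b j) - B₂ (b i) (b j) = 0 := hQb hij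
  linarith [hB₁b hij]
end

section
/- Let V₊ and V₋ be finite-dimensional real vector spaces equipped with symmetric bilinear forms q₊ and q₋, with q₊ positive definite and q₋ negative definite. Let U be a finite-dimensional real vector space and g₊ : U → V₊, g₋ : U → V₋ linear maps. Then for all but finitely many real numbers a, the bilinear form q₊ ⊕ q₋ on V₊ × V₋ restricts to a nondegenerate form on the image of the map u ↦ (a·g₊(u), g₋(u)). -/
/-!
Let `S ⊆ V₊ × V₋` be the image of `u ↦ (g₊ u, g₋ u)` and let `P`, `M` be the forms
`q₊`, `q₋` read on the two components. For the parameter `a`, the form on the image of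
`u ↦ (a • g₊ u, g₋ u)` is `a² P + M` read through `S`, so it is nondegenerate as soon as
`a² P + M` is nondegenerate on `S`. At `t = -1` the pencil `t P + M` is negative definite,
so its Gram determinant on `S` is a nonzero polynomial in `t`, with finitely many roots.
-/

open Polynomial
open LinearMap (BilinForm)

theorem Set.Finite.preimage_pow {R : Type*} [CommRing R] [IsDomain R] {s : Set R}
    (hs : s.Finite) {n : ℕ} (hn : n ≠ 0) : ((· ^ n) ⁻¹' s).Finite :=
  hs.preimage' fun b _ => by
    classical
    refine (nthRoots n b).toFinset.finite_toSet.subset fun a ha => ?_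
    simpa [mem_nthRoots (Nat.pos_of_ne_zero hn)] using ha

namespace LinearMap.BilinForm

variable {K V : Type*} [Field K] [AddCommGroup V] [Module K V] [FiniteDimensional K V]

theorem finite_setOf_not_nondegenerate_smul_add {P M : BilinForm K V} {t₀ : K}
    (h₀ : (t₀ • P + M).Nondegenerate) :
    {t : K | ¬ (t • P + M).Nondegenerate}.Finite := by
  let b := Module.finBasis K V
  let p : K[X] := ((X : K[X]) • (toMatrix b P).map C + (toMatrix b M).map C).det
  have eval_p (t : K) : p.eval t = (toMatrix b (t • P + M)).det := by
    rw [← coe_evalRingHom, RingHom.map_det]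
    congr 1
    ext i j
    simp only [RingHom.mapMatrix_apply, Matrix.map_apply, Matrix.add_apply, Matrix.smul_apply,
      coe_evalRingHom, eval_mul, eval_X, eval_C, map_add, map_smul, smul_eq_mul]
  have hp : p ≠ 0 := fun h =>
    (nondegenerate_iff_det_ne_zero b).1 h₀ (by rw [← eval_p, h, eval_zero])
  refine (p.finite_setOfPred_isRoot hp).subset fun t ht => ?_
  rwa [Set.mem_ofPred, nondegenerate_iff_det_ne_zero b, ← eval_p, not_not] at ht

theorem nondegenerate_restrict_of_anisotropic {B : BilinForm K V}
    (hB : B.toQuadraticMap.Anisotropic) (W : Submodule K V) : (B.restrict W).Nondegenerate :=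
  .ofSeparatingLeft <| separatingLeft_of_anisotropic fun w hw => Subtype.ext (hB w hw)

end LinearMap.BilinForm

theorem nondegenerate_on_image_for_almost_all_general
    (U Vp Vm : Type*)
    [AddCommGroup U] [Module ℝ U]
    [AddCommGroup Vp] [Module ℝ Vp] [FiniteDimensional ℝ Vp]
    [AddCommGroup Vm] [Module ℝ Vm] [FiniteDimensional ℝ Vm]
    (qp : LinearMap.BilinForm ℝ Vp) (qm : LinearMap.BilinForm ℝ Vm)
    (hqp_pos : ∀ v : Vp, v ≠ 0 → 0 < qp v v)
    (hqm_neg : ∀ v : Vm, v ≠ 0 → qm v v < 0)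
    (gp : U →ₗ[ℝ] Vp) (gm : U →ₗ[ℝ] Vm) :
    {a : ℝ | ¬ ∀ w ∈ Set.range (fun u : U => (a • gp u, gm u)),
        (∀ w' ∈ Set.range (fun u : U => (a • gp u, gm u)),
          qp w.1 w'.1 + qm w.2 w'.2 = 0) → w = 0}.Finite := by
  let S := LinearMap.range (gp.prod gm)
  let P : BilinForm ℝ (Vp × Vm) := qp.compl₁₂ (.fst ℝ Vp Vm) (.fst ℝ Vp Vm)
  let M : BilinForm ℝ (Vp × Vm) := qm.compl₁₂ (.snd ℝ Vp Vm) (.snd ℝ Vp Vm)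
  have hpd : (qp.toQuadraticMap.prod (-qm).toQuadraticMap).PosDef :=
    .prod hqp_pos fun v hv => neg_pos.2 (hqm_neg v hv)
  have h₀ : ((-1 : ℝ) • P.restrict S + M.restrict S).Nondegenerate :=
    BilinForm.nondegenerate_restrict_of_anisotropic (B := (-1 : ℝ) • P + M)
      (fun x hx => hpd.anisotropic x (by simp [P, M] at hx ⊢; linarith)) S
  refine ((BilinForm.finite_setOf_not_nondegenerate_smul_add h₀).preimage_pow
    two_ne_zero).subset fun a ha hnd => ha ?_
  rintro _ ⟨u, rfl⟩ h
  have hu : (⟨(gp u, gm u), u, rfl⟩ : S) = 0 := hnd.1 _ fun ⟨_, u', hu'⟩ => by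
    subst hu'
    simpa [P, M, mul_assoc, pow_two] using h _ ⟨u', rfl⟩
  obtain ⟨hgp, hgm⟩ := Prod.mk_eq_zero.1 (congrArg Subtype.val hu)
  simp [hgp, hgm]

/-- Let `V₊`, `V₋` be finite-dimensional real vector spaces with a positive definite
symmetric bilinear form `q₊` and a negative definite symmetric bilinear form `q₋`,
and let `g₊ : U → V₊`, `g₋ : U → V₋` be linear maps from a finite-dimensional real
vector space `U`.  Then for all but finitely many `a : ℝ`, the form
`q₊ ⊕ q₋` on `V₊ × V₋` is nondegenerate on the image of `u ↦ (a • g₊ u, g₋ u)`. -/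
theorem nondegenerate_on_image_for_almost_all
    (U Vp Vm : Type*)
    [AddCommGroup U] [Module ℝ U] [FiniteDimensional ℝ U]
    [AddCommGroup Vp] [Module ℝ Vp] [FiniteDimensional ℝ Vp]
    [AddCommGroup Vm] [Module ℝ Vm] [FiniteDimensional ℝ Vm]
    (qp : LinearMap.BilinForm ℝ Vp) (qm : LinearMap.BilinForm ℝ Vm)
    (hqp_symm : qp.IsSymm) (hqm_symm : qm.IsSymm)
    (hqp_pos : ∀ v : Vp, v ≠ 0 → 0 < qp v v)
    (hqm_neg : ∀ v : Vm, v ≠ 0 → qm v v < 0)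
    (gp : U →ₗ[ℝ] Vp) (gm : U →ₗ[ℝ] Vm) :
    {a : ℝ | ¬ ∀ w ∈ Set.range (fun u : U => (a • gp u, gm u)),
        (∀ w' ∈ Set.range (fun u : U => (a • gp u, gm u)),
          qp w.1 w'.1 + qm w.2 w'.2 = 0) → w = 0}.Finite :=
  nondegenerate_on_image_for_almost_all_general U Vp Vm qp qm hqp_pos hqm_neg gp gm
end

section
/- Let D be a triangulated category with a t-structure whose heart A has the property that every object of A has finite length, and suppose the t-structure is nondegenerate (an object all of whose t-cohomology objects vanish is zero). Let F : D → D' be a t-exact triangulated functor to a triangulated category D' with a t-structure, such that the restriction of F to the heart A is faithful and exact. Then F is conservative: a morphism f in D such that F(f) is an isomorphism is itself an isomorphism. -/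
open CategoryTheory CategoryTheory.Limits CategoryTheory.Pretriangulated

/-!
If `F X = 0`, then `F` kills every truncation of `X` as well: `F (τ_{>n} X) ≅ F (τ_{≤n} X)⟦1⟧`
is both `≥ n + 1` and `≤ n - 1` for `t'`. An object of a shifted heart killed by `F` is zero by
faithfulness on the heart, and since `τ_{≤n} X` lies in the `n`-th shifted heart when `X` is
`≥ n`, such an `X` is `≥ n + 1`. Iterating, `τ_{>0} X` is `≥ m` for all `m` and `X` is `≤ m` for
all `m`, so both vanish by nondegeneracy. A triangulated functor that reflects zero objects is
conservative, by looking at the cone of a morphism.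
-/

namespace CategoryTheory.Triangulated.TStructure

variable {C : Type*} [Category C] [Preadditive C] [HasZeroObject C] [HasShift C ℤ]
  [∀ n : ℤ, (shiftFunctor C n).Additive] [Pretriangulated C] (t : TStructure C)

/- These need no octahedral axiom, only that `t.ge n` and `t.le n` are closed under extensions. -/

lemma isGE_truncLE_obj_of_isGE (X : C) (n : ℤ) [t.IsGE X n] :
    t.IsGE ((t.truncLE n).obj X) n := by
  have : t.IsGE (((t.truncGT n).obj X)⟦(-1 : ℤ)⟧) n :=
    have := t.isGE_shift ((t.truncGT n).obj X) (n + 1) (-1) (n + 2)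
    t.isGE_of_ge _ n (n + 2)
  exact t.isGE₂ _ (inv_rot_of_distTriang _ (t.triangleLEGT_distinguished n X)) n this ‹_›

lemma isLE_truncGT_obj_of_isLE (X : C) (n : ℤ) [t.IsLE X n] :
    t.IsLE ((t.truncGT (n - 1)).obj X) n := by
  have : t.IsLE (((t.truncLE (n - 1)).obj X)⟦(1 : ℤ)⟧) n :=
    have := t.isLE_shift ((t.truncLE (n - 1)).obj X) (n - 1) 1 (n - 2)
    t.isLE_of_le _ (n - 2) n
  exact t.isLE₂ _ (rot_of_distTriang _ (t.triangleLEGT_distinguished (n - 1) X)) n ‹_› this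

end CategoryTheory.Triangulated.TStructure

namespace CategoryTheory.Functor

open Triangulated

variable {C D : Type*} [Category C] [Category D]
  [Preadditive C] [HasZeroObject C] [HasShift C ℤ]
  [∀ n : ℤ, (shiftFunctor C n).Additive] [Pretriangulated C]
  [Preadditive D] [HasShift D ℤ] [∀ n : ℤ, (shiftFunctor D n).Additive]

lemma isZero_of_isLE_of_isGE_of_isZero_obj {F : C ⥤ D} [F.CommShift ℤ] {t : TStructure C}
    (hheart : ∀ X : C, t.heart X → IsZero (F.obj X) → IsZero X)
    (X : C) (n : ℤ) [t.IsLE X n] [t.IsGE X n] (hX : IsZero (F.obj X)) : IsZero X := by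
  have hXn : t.heart (X⟦n⟧) := (t.mem_heart_iff _).2 ⟨t.isLE_shift X n n 0, t.isGE_shift X n n 0⟩
  have hFXn : IsZero (F.obj (X⟦n⟧)) :=
    ((shiftFunctor D n).map_isZero hX).of_iso ((F.commShiftIso n).app X)
  exact ((shiftFunctor C (-n)).map_isZero (hheart _ hXn hFXn)).of_iso
    ((shiftEquiv C n).unitIso.app X)

variable [HasZeroObject D] [Pretriangulated D]

structure IsTExact (F : C ⥤ D) (t : TStructure C) (t' : TStructure D) : Prop where
  le : ∀ (n : ℤ) (X : C), t.le n X → t'.le n (F.obj X)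
  ge : ∀ (n : ℤ) (X : C), t.ge n X → t'.ge n (F.obj X)

lemma isIso_of_isIso_map_of_reflects_isZero {F : C ⥤ D} [F.CommShift ℤ] [F.IsTriangulated]
    (hF : ∀ X : C, IsZero (F.obj X) → IsZero X) {X Y : C} (f : X ⟶ Y) [IsIso (F.map f)] :
    IsIso f := by
  obtain ⟨Z, _, _, mem⟩ := distinguished_cocone_triangle f
  have hFZ : IsZero (F.obj Z) :=
    Triangle.isZero₃_of_isIso₁ _ (F.map_distinguished _ mem) (inferInstanceAs (IsIso (F.map f)))
  exact (Triangle.isZero₃_iff_isIso₁ _ mem).1 (hF Z hFZ)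

variable {F : C ⥤ D} [F.CommShift ℤ] [F.IsTriangulated] {t : TStructure C} {t' : TStructure D}

lemma IsTExact.isZero_obj_truncLE_and_truncGT (hF : F.IsTExact t t') {X : C}
    (hX : IsZero (F.obj X)) (n : ℤ) :
    IsZero (F.obj ((t.truncLE n).obj X)) ∧ IsZero (F.obj ((t.truncGT n).obj X)) := by
  have mem := F.map_distinguished _ (t.triangleLEGT_distinguished n X)
  let e : F.obj ((t.truncGT n).obj X) ≅ (F.obj ((t.truncLE n).obj X))⟦(1 : ℤ)⟧ :=
    @asIso _ _ _ _ _ ((Triangle.isZero₂_iff_isIso₃ _ mem).1 hX)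
  have : t'.IsLE (F.obj ((t.truncLE n).obj X)) n := ⟨hF.le n _ (t.le_of_isLE _ n)⟩
  have := t'.isLE_shift (F.obj ((t.truncLE n).obj X)) n 1 (n - 1)
  have : t'.IsLE (F.obj ((t.truncGT n).obj X)) (n - 1) := t'.isLE_of_iso e.symm (n - 1)
  have : t'.IsGE (F.obj ((t.truncGT n).obj X)) (n + 1) := ⟨hF.ge (n + 1) _ (t.ge_of_isGE _ _)⟩
  have hGT : IsZero (F.obj ((t.truncGT n).obj X)) := t'.isZero _ (n - 1) (n + 1)
  exact ⟨((shiftFunctor D (-1 : ℤ)).map_isZero (hGT.of_iso e.symm)).of_iso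
    ((shiftEquiv D (1 : ℤ)).unitIso.app _), hGT⟩

lemma IsTExact.isGE_succ_of_isZero_obj (hF : F.IsTExact t t')
    (hheart : ∀ X : C, t.heart X → IsZero (F.obj X) → IsZero X)
    {X : C} (hX : IsZero (F.obj X)) (n : ℤ) [t.IsGE X n] : t.IsGE X (n + 1) := by
  have := t.isGE_truncLE_obj_of_isGE X n
  rw [t.isGE_iff_isZero_truncLE_obj n (n + 1) rfl]
  exact isZero_of_isLE_of_isGE_of_isZero_obj hheart _ n
    (hF.isZero_obj_truncLE_and_truncGT hX n).1

lemma IsTExact.isLE_pred_of_isZero_obj (hF : F.IsTExact t t')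
    (hheart : ∀ X : C, t.heart X → IsZero (F.obj X) → IsZero X)
    {X : C} (hX : IsZero (F.obj X)) (n : ℤ) [t.IsLE X n] : t.IsLE X (n - 1) := by
  have := t.isLE_truncGT_obj_of_isLE X n
  rw [t.isLE_iff_isZero_truncGT_obj]
  exact isZero_of_isLE_of_isGE_of_isZero_obj hheart _ n
    (hF.isZero_obj_truncLE_and_truncGT hX (n - 1)).2

lemma IsTExact.isGE_of_isZero_obj (hF : F.IsTExact t t')
    (hheart : ∀ X : C, t.heart X → IsZero (F.obj X) → IsZero X)
    {X : C} (hX : IsZero (F.obj X)) (n : ℤ) [t.IsGE X n] (m : ℤ) : t.IsGE X m := by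
  rcases le_total m n with hmn | hnm
  · exact t.isGE_of_ge X m n hmn
  · induction m, hnm using Int.leInduction with
    | base => infer_instance
    | succ m _ ih => exact hF.isGE_succ_of_isZero_obj hheart hX m

lemma IsTExact.isLE_of_isZero_obj (hF : F.IsTExact t t')
    (hheart : ∀ X : C, t.heart X → IsZero (F.obj X) → IsZero X)
    {X : C} (hX : IsZero (F.obj X)) (n : ℤ) [t.IsLE X n] (m : ℤ) : t.IsLE X m := by
  rcases le_total n m with hnm | hmn
  · exact t.isLE_of_le X n m hnm
  · induction m, hmn using Int.leInductionDown with
    | base => infer_instance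
    | pred m _ ih => exact hF.isLE_pred_of_isZero_obj hheart hX m

lemma IsTExact.isZero_of_isZero_obj (hF : F.IsTExact t t')
    (hheart : ∀ X : C, t.heart X → IsZero (F.obj X) → IsZero X)
    (hle : ∀ X : C, (∀ n : ℤ, t.le n X) → IsZero X)
    (hge : ∀ X : C, (∀ n : ℤ, t.ge n X) → IsZero X)
    {X : C} (hX : IsZero (F.obj X)) : IsZero X := by
  have hGT : IsZero ((t.truncGT 0).obj X) := hge _ fun m ↦
    have := hF.isGE_of_isZero_obj hheart (hF.isZero_obj_truncLE_and_truncGT hX 0).2 (0 + 1) m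
    t.ge_of_isGE _ m
  have : t.IsLE X 0 := (t.isLE_iff_isZero_truncGT_obj 0 X).2 hGT
  exact hle X fun m ↦
    have := hF.isLE_of_isZero_obj hheart hX 0 m
    t.le_of_isLE X m

end CategoryTheory.Functor

/-- Let `C` be a triangulated category with a nondegenerate t-structure `t` whose heart
has all objects of finite length, and let `F : C ⥤ D` be a t-exact triangulated functor
(to a triangulated category `D` with a t-structure `t'`) whose restriction to the heart
of `t` is faithful (it is automatically exact, being `H⁰ ∘ F` on the heart).  Then `F`
is conservative. -/
theorem t_exact_faithful_on_heart_conservative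
    (C D : Type*) [Category C] [Category D]
    [Preadditive C] [HasZeroObject C] [HasShift C ℤ]
    [∀ n : ℤ, (shiftFunctor C n).Additive] [Pretriangulated C]
    [Preadditive D] [HasZeroObject D] [HasShift D ℤ]
    [∀ n : ℤ, (shiftFunctor D n).Additive] [Pretriangulated D]
    (t : Triangulated.TStructure C) (t' : Triangulated.TStructure D)
    (F : C ⥤ D) [F.CommShift ℤ] [F.IsTriangulated]
    -- `F` is t-exact
    (hFle : ∀ (n : ℤ) (X : C), t.le n X → t'.le n (F.obj X))
    (hFge : ∀ (n : ℤ) (X : C), t.ge n X → t'.ge n (F.obj X))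
    -- the t-structure `t` is nondegenerate
    (hnd₁ : ∀ X : C, (∀ n : ℤ, t.le n X) → IsZero X)
    (hnd₂ : ∀ X : C, (∀ n : ℤ, t.ge n X) → IsZero X)
    -- every object of the heart of `t` has finite length: its subobject lattice
    -- (in the heart) satisfies both chain conditions
    (hfl : ∀ X : ObjectProperty.FullSubcategory (fun X : C => t.le 0 X ∧ t.ge 0 X),
      WellFoundedLT (Subobject X) ∧ WellFoundedGT (Subobject X))
    -- the restriction of `F` to the heart of `t` is faithful
    (hfaith : ∀ X Y : C, t.le 0 X ∧ t.ge 0 X → t.le 0 Y ∧ t.ge 0 Y →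
      ∀ f g : X ⟶ Y, F.map f = F.map g → f = g) :
    ∀ {X Y : C} (f : X ⟶ Y), IsIso (F.map f) → IsIso f := by
  have hheart (X : C) (hX : t.heart X) (hFX : IsZero (F.obj X)) : IsZero X :=
    (IsZero.iff_id_eq_zero X).2 (hfaith X X hX hX _ _ (hFX.eq_of_src _ _))
  intro X Y f _
  exact Functor.isIso_of_isIso_map_of_reflects_isZero
    (fun _ ↦ Functor.IsTExact.isZero_of_isZero_obj ⟨hFle, hFge⟩ hheart hnd₁ hnd₂) f
end

section
/- If f : A → B is a homomorphism of abelian groups with B finitely generated, such that f induces isomorphisms A/ℓA ≅ B/ℓB and A[ℓ] ≅ B[ℓ] for all primes ℓ, and an isomorphism A ⊗ ℚ ≅ B ⊗ ℚ, then f is an isomorphism. -/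
/-- If `1 ⊗ x = 0` in `ℚ ⊗[ℤ] M`, then `x` is torsion. -/
private lemma torsion_of_tmul_eq_zero {M : Type*} [AddCommGroup M] (x : M)
    (hx : (1 : ℚ) ⊗ₜ[ℤ] x = (0 : TensorProduct ℤ ℚ M)) :
    ∃ n : ℕ, 0 < n ∧ (n : ℤ) • x = 0 := by
  haveI : IsLocalizedModule (nonZeroDivisors ℤ) (TensorProduct.mk ℤ ℚ M 1) :=
    (isLocalizedModule_iff_isBaseChange (nonZeroDivisors ℤ) ℚ _).2
      (TensorProduct.isBaseChange ℤ M ℚ)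
  have hx' : (TensorProduct.mk ℤ ℚ M 1) x = 0 := hx
  obtain ⟨s, hs⟩ := (IsLocalizedModule.eq_zero_iff (nonZeroDivisors ℤ) _).1 hx'
  have hsx : (s : ℤ) • x = 0 := hs
  have hs0 : (s : ℤ) ≠ 0 := nonZeroDivisors.coe_ne_zero s
  refine ⟨(s : ℤ).natAbs, Int.natAbs_pos.2 hs0, ?_⟩
  rcases Int.natAbs_eq (s : ℤ) with h | h
  · rw [← h]; exact hsx
  · have := hsx
    rw [h, neg_smul, neg_eq_zero] at this
    exact this

/-- If the elements of `K` killed by a prime are zero, then the elements of `K`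
killed by any positive integer are zero. -/
private lemma eq_zero_of_smul_eq_zero {M : Type*} [AddCommGroup M] (K : AddSubgroup M)
    (h : ∀ ℓ : ℕ, ℓ.Prime → ∀ x ∈ K, (ℓ : ℤ) • x = 0 → x = 0) :
    ∀ n : ℕ, 0 < n → ∀ x ∈ K, (n : ℤ) • x = 0 → x = 0 := by
  intro n
  induction n using Nat.strong_induction_on with
  | _ n ih =>
    intro hn x hxK hx
    by_cases hn1 : n = 1
    · subst hn1; simpa using hx
    · have hℓ : (n.minFac).Prime := Nat.minFac_prime hn1
      set ℓ := n.minFac with hℓdef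
      set m := n / ℓ with hmdef
      have hmℓ : m * ℓ = n := Nat.div_mul_cancel (Nat.minFac_dvd n)
      have hmlt : m < n := Nat.div_lt_self hn hℓ.one_lt
      have hm0 : 0 < m := by
        rcases Nat.eq_zero_or_pos m with h0 | h0
        · exfalso; rw [h0, zero_mul] at hmℓ; omega
        · exact h0
      have hyK : (ℓ : ℤ) • x ∈ K := K.zsmul_mem hxK _
      have hy : (m : ℤ) • ((ℓ : ℤ) • x) = 0 := by
        rw [smul_smul, ← Int.natCast_mul, hmℓ]
        exact hx
      have hy0 : (ℓ : ℤ) • x = 0 := ih m hmlt hm0 _ hyK hy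
      exact h ℓ hℓ x hxK hy0

/-- If `f : A → B` is a homomorphism of abelian groups with `B` finitely generated,
which induces isomorphisms `A/ℓA ≅ B/ℓB` and `A[ℓ] ≅ B[ℓ]` for every prime `ℓ`, as
well as an isomorphism `A ⊗ ℚ ≅ B ⊗ ℚ`, then `f` is an isomorphism. -/
theorem bijective_of_mod_torsion_rational_iso
    (A B : Type*) [AddCommGroup A] [AddCommGroup B] [AddGroup.FG B]
    (f : A →+ B)
    -- `f` induces a surjection `A → B/ℓB` for every prime `ℓ` (surjectivity of `A/ℓA → B/ℓB`)
    (hmodsurj : ∀ ℓ : ℕ, ℓ.Prime →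
      Function.Surjective
        ((QuotientAddGroup.mk' ((zsmulAddGroupHom (ℓ : ℤ) : B →+ B).range)).comp f))
    -- injectivity of `A/ℓA → B/ℓB`
    (hmodinj : ∀ ℓ : ℕ, ℓ.Prime →
      ((zsmulAddGroupHom (ℓ : ℤ) : B →+ B).range).comap f ≤
        (zsmulAddGroupHom (ℓ : ℤ) : A →+ A).range)
    -- injectivity of `A[ℓ] → B[ℓ]`
    (htorinj : ∀ ℓ : ℕ, ℓ.Prime → ∀ a : A, (ℓ : ℤ) • a = 0 → f a = 0 → a = 0)
    -- surjectivity of `A[ℓ] → B[ℓ]`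
    (htorsurj : ∀ ℓ : ℕ, ℓ.Prime → ∀ b : B, (ℓ : ℤ) • b = 0 →
      ∃ a : A, (ℓ : ℤ) • a = 0 ∧ f a = b)
    -- `f ⊗ ℚ : A ⊗ ℚ → B ⊗ ℚ` is an isomorphism
    (hQ : Function.Bijective
      ⇑(TensorProduct.map (LinearMap.id : ℚ →ₗ[ℤ] ℚ) f.toIntLinearMap)) :
    Function.Bijective f := by
  constructor
  · -- injectivity
    rw [injective_iff_map_eq_zero]
    intro a ha
    have h1 : (1 : ℚ) ⊗ₜ[ℤ] a = (0 : TensorProduct ℤ ℚ A) := by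
      apply hQ.1
      rw [map_zero, TensorProduct.map_tmul]
      simp [ha]
    obtain ⟨n, hn, hna⟩ := torsion_of_tmul_eq_zero a h1
    exact eq_zero_of_smul_eq_zero f.ker
      (fun ℓ hℓ x hxK hx => htorinj ℓ hℓ x hx (AddMonoidHom.mem_ker.1 hxK)) n hn a (AddMonoidHom.mem_ker.2 ha) hna
  · -- surjectivity
    set H := f.range with hHdef
    set π := QuotientAddGroup.mk' H with hπdef
    have hπf : ∀ a : A, π (f a) = 0 := fun a =>
      (QuotientAddGroup.eq_zero_iff (f a)).2 ⟨a, rfl⟩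
    -- every element of `B ⧸ H` is torsion
    have htor : ∀ c : B ⧸ H, ∃ n : ℕ, 0 < n ∧ (n : ℤ) • c = 0 := by
      intro c
      obtain ⟨b, rfl⟩ := QuotientAddGroup.mk'_surjective H c
      obtain ⟨x, hx⟩ := hQ.2 ((1 : ℚ) ⊗ₜ[ℤ] b)
      have key : ∀ y : TensorProduct ℤ ℚ A,
          TensorProduct.map (LinearMap.id : ℚ →ₗ[ℤ] ℚ) π.toIntLinearMap
            (TensorProduct.map (LinearMap.id : ℚ →ₗ[ℤ] ℚ) f.toIntLinearMap y) = 0 := by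
        intro y
        induction y using TensorProduct.induction_on with
        | zero => simp
        | tmul q a => simp [hπf a]
        | add u v hu hv => simp [hu, hv]
      have h0 : (1 : ℚ) ⊗ₜ[ℤ] (π b) = (0 : TensorProduct ℤ ℚ (B ⧸ H)) := by
        have := key x
        rw [hx, TensorProduct.map_tmul] at this
        simpa using this
      exact torsion_of_tmul_eq_zero (π b) h0
    haveI : Finite (B ⧸ H) := by
      apply AddCommGroup.finite_of_fg_torsion
      intro c
      obtain ⟨n, hn, hnc⟩ := htor c
      exact isOfFinAddOrder_iff_nsmul_eq_zero.2 ⟨n, hn, by rwa [natCast_zsmul] at hnc⟩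
    -- multiplication by each prime kills no nonzero element of `B ⧸ H`
    have hker : ∀ ℓ : ℕ, ℓ.Prime → ∀ x : B ⧸ H, (ℓ : ℤ) • x = 0 → x = 0 := by
      intro ℓ hℓ x hx
      have hsurj : Function.Surjective (fun c : B ⧸ H => (ℓ : ℤ) • c) := by
        intro c
        obtain ⟨b, rfl⟩ := QuotientAddGroup.mk'_surjective H c
        obtain ⟨a, ha⟩ := hmodsurj ℓ hℓ
          ((QuotientAddGroup.mk' ((zsmulAddGroupHom (ℓ : ℤ) : B →+ B).range)) b)
        rw [AddMonoidHom.comp_apply] at ha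
        obtain ⟨z, hz, hzb⟩ := (QuotientAddGroup.mk'_eq_mk' _).1 ha
        obtain ⟨b', rfl⟩ := hz
        refine ⟨π b', ?_⟩
        have : b = f a + (ℓ : ℤ) • b' := by
          rw [← hzb]; rfl
        rw [this]
        simp only [map_add, map_zsmul, hπf a, zero_add]
        rw [← hπdef, hπf a, zero_add]
      have hinj := Finite.injective_iff_surjective.2 hsurj
      apply hinj
      show (ℓ : ℤ) • x = (ℓ : ℤ) • 0
      rw [hx, smul_zero]
    intro b
    have hb0 : π b = 0 := by
      obtain ⟨n, hn, hnc⟩ := htor (π b)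
      exact eq_zero_of_smul_eq_zero ⊤ (fun ℓ hℓ x _ hx => hker ℓ hℓ x hx)
        n hn (π b) trivial hnc
    exact (QuotientAddGroup.eq_zero_iff b).1 hb0
end

section
/- Let V₊, V₋ be finite-dimensional real inner product spaces (q₊ positive definite on V₊, and −q₋ positive definite on V₋), U a finite-dimensional real vector space, and g₊ : U → V₊, g₋ : U → V₋ linear maps such that ker g₊ ∩ ker g₋ = 0. Then there exists a basis u₁,...,u_m of U such that q₊(g₊(u_i), g₊(u_j)) = 0 and q₋(g₋(u_i), g₋(u_j)) = 0 for all i ≠ j. -/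
/-- Let `q₊` be positive definite on `V₊` and `q₋` negative definite on `V₋`, and let
`g₊ : U → V₊`, `g₋ : U → V₋` be linear maps with `ker g₊ ∩ ker g₋ = 0`.  Then `U` has
a basis which is simultaneously orthogonal for the two pullback forms
`B₊(u,u') = q₊(g₊ u, g₊ u')` and `B₋(u,u') = q₋(g₋ u, g₋ u')`. -/
theorem simultaneous_orthogonal_basis_pullback
    (U Vp Vm : Type*)
    [AddCommGroup U] [Module ℝ U] [FiniteDimensional ℝ U]
    [AddCommGroup Vp] [Module ℝ Vp] [FiniteDimensional ℝ Vp]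
    [AddCommGroup Vm] [Module ℝ Vm] [FiniteDimensional ℝ Vm]
    (qp : LinearMap.BilinForm ℝ Vp) (qm : LinearMap.BilinForm ℝ Vm)
    (hqp_symm : qp.IsSymm) (hqm_symm : qm.IsSymm)
    (hqp_pos : ∀ v : Vp, v ≠ 0 → 0 < qp v v)
    (hqm_neg : ∀ v : Vm, v ≠ 0 → qm v v < 0)
    (gp : U →ₗ[ℝ] Vp) (gm : U →ₗ[ℝ] Vm)
    (hker : LinearMap.ker gp ⊓ LinearMap.ker gm = ⊥) :
    ∃ b : Module.Basis (Fin (Module.finrank ℝ U)) ℝ U,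
      ∀ i j, i ≠ j →
        qp (gp (b i)) (gp (b j)) = 0 ∧ qm (gm (b i)) (gm (b j)) = 0 := by
  -- The combined form B = B₊ - B₋ is positive definite.
  set Bp : LinearMap.BilinForm ℝ U := qp.compl₁₂ gp gp with hBp
  set Bm : LinearMap.BilinForm ℝ U := qm.compl₁₂ gm gm with hBm
  set B : LinearMap.BilinForm ℝ U := Bp - Bm with hB
  have hBp_apply : ∀ u v : U, Bp u v = qp (gp u) (gp v) := fun u v => rfl
  have hBm_apply : ∀ u v : U, Bm u v = qm (gm u) (gm v) := fun u v => rfl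
  have hB_apply : ∀ u v : U, B u v = qp (gp u) (gp v) - qm (gm u) (gm v) := fun u v => rfl
  have hBp_nonneg : ∀ u : U, 0 ≤ Bp u u := by
    intro u
    rcases eq_or_ne (gp u) 0 with h | h
    · simp [hBp_apply, h]
    · exact le_of_lt (hqp_pos _ h)
  have hBm_nonpos : ∀ u : U, Bm u u ≤ 0 := by
    intro u
    rcases eq_or_ne (gm u) 0 with h | h
    · simp [hBm_apply, h]
    · exact le_of_lt (hqm_neg _ h)
  have hB_nonneg : ∀ u : U, 0 ≤ B u u := by
    intro u
    have := hBp_nonneg u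
    have := hBm_nonpos u
    simp only [hB, LinearMap.sub_apply]
    linarith
  have hB_def : ∀ u : U, B u u = 0 → u = 0 := by
    intro u hu
    have h1 : Bp u u = 0 ∧ Bm u u = 0 := by
      have := hBp_nonneg u; have := hBm_nonpos u
      simp only [hB, LinearMap.sub_apply] at hu
      constructor <;> linarith
    have hgp : gp u = 0 := by
      by_contra h
      exact absurd h1.1 (ne_of_gt (hqp_pos _ h))
    have hgm : gm u = 0 := by
      by_contra h
      exact absurd h1.2 (ne_of_lt (hqm_neg _ h))
    have : u ∈ LinearMap.ker gp ⊓ LinearMap.ker gm := ⟨hgp, hgm⟩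
    rwa [hker, Submodule.mem_bot] at this
  -- Make U an inner product space via B.
  letI c : InnerProductSpace.Core ℝ U :=
    { inner := fun u v => B u v
      conj_inner_symm := by
        intro x y
        simp only [starRingEnd_apply, star_trivial, hB, LinearMap.sub_apply]
        rw [hBp_apply, hBp_apply, hBm_apply, hBm_apply, ← hqp_symm.eq (gp y) (gp x),
          ← hqm_symm.eq (gm y) (gm x)]
      re_inner_nonneg := fun x => hB_nonneg x
      add_left := by intro x y z; simp
      smul_left := by intro x y r; simp
      definite := hB_def }
  letI : NormedAddCommGroup U := c.toNormedAddCommGroup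
  letI : InnerProductSpace ℝ U := InnerProductSpace.ofCore c.toCore
  have hinner : ∀ u v : U, (inner ℝ u v : ℝ) = B u v := fun u v => rfl
  -- Define the symmetric operator representing Bp.
  set T : U →ₗ[ℝ] U :=
    { toFun := fun u => (InnerProductSpace.toDual ℝ U).symm
        (LinearMap.toContinuousLinearMap (Bp u))
      map_add' := by
        intro x y
        simp only [map_add]
      map_smul' := by
        intro r x
        simp only [map_smul, LinearIsometryEquiv.map_smulₛₗ, starRingEnd_apply,
          star_trivial, RingHom.id_apply] } with hT
  have hT_apply : ∀ u v : U, (inner ℝ (T u) v : ℝ) = Bp u v := by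
    intro u v
    rw [hT]
    exact InnerProductSpace.toDual_symm_apply
  have hT_symm : T.IsSymmetric := by
    intro x y
    rw [hT_apply, real_inner_comm, hT_apply, hBp_apply, hBp_apply,
      ← hqp_symm.eq (gp x) (gp y)]
  set b := hT_symm.eigenvectorBasis rfl with hbdef
  refine ⟨b.toBasis, fun i j hij => ?_⟩
  simp only [OrthonormalBasis.coe_toBasis]
  have horth : (inner ℝ (b i) (b j) : ℝ) = 0 := b.orthonormal.2 hij
  have hBp0 : Bp (b i) (b j) = 0 := by
    rw [← hT_apply]
    have h := hT_symm.apply_eigenvectorBasis rfl i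
    rw [← hbdef] at h
    rw [h, real_inner_smul_left, horth, mul_zero]
  have hB0 : B (b i) (b j) = 0 := by rw [← hinner, horth]
  refine ⟨hBp0, ?_⟩
  have : Bm (b i) (b j) = Bp (b i) (b j) - B (b i) (b j) := by
    simp [hB, LinearMap.sub_apply]
  rw [hBm_apply] at this
  rw [this, hBp0, hB0, sub_zero]
end
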